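/- There exists a constant k ∈ ℕ such that for every one-variable first-order modal formula φ with counting quantifiers: if φ has a quasimodel, then φ has a quasimodel (W,≺,q,I,{r_i}_{i∈I}) in which both |W| ≤ 2^{(|φ|+2)^k} and |I| ≤ 2^{(|φ|+2)^k}; that is, φ has a finite quasimodel whose underlying tree and index set are of size at most exponential in a fixed polynomial of the length of φ. -/

import Mathlib

/-! Syntax of one-variable first-order modal formulas with counting quantifiers:
    φ ::= P(x) | ¬φ | (φ∧φ) | ◇φ | ∃[≤c]x φ. -/

inductive Fml : Type
  | atom : ℕ → Fml
  | neg : Fml → Fml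
  | conj : Fml → Fml → Fml
  | dia : Fml → Fml
  | countLe : ℕ → Fml → Fml
deriving DecidableEq

namespace Fml

/-- Subformulas. -/
def sub : Fml → Finset Fml
  | atom n => {atom n}
  | neg ψ => insert (neg ψ) ψ.sub
  | conj ψ χ => insert (conj ψ χ) (ψ.sub ∪ χ.sub)
  | dia ψ => insert (dia ψ) ψ.sub
  | countLe c ψ => insert (countLe c ψ) ψ.sub

/-- Modal depth. -/
def md : Fml → ℕ
  | atom _ => 0
  | neg ψ => ψ.md
  | conj ψ χ => max ψ.md χ.md
  | dia ψ => ψ.md + 1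
  | countLe _ ψ => ψ.md

/-- Capacity: the largest counting-quantifier subscript (0 if none). -/
def cpt : Fml → ℕ
  | atom _ => 0
  | neg ψ => ψ.cpt
  | conj ψ χ => max ψ.cpt χ.cpt
  | dia ψ => ψ.cpt
  | countLe c ψ => max c ψ.cpt

/-- Length of the formula as a string, counting subscripts written in binary. -/
def len : Fml → ℕ
  | atom _ => 1
  | neg ψ => ψ.len + 1
  | conj ψ χ => ψ.len + χ.len + 1
  | dia ψ => ψ.len + 1
  | countLe c ψ => ψ.len + Nat.size c + 1

/-- Predicate symbols occurring in a formula. -/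
def preds : Fml → Finset ℕ
  | atom n => {n}
  | neg ψ => ψ.preds
  | conj ψ χ => ψ.preds ∪ χ.preds
  | dia ψ => ψ.preds
  | countLe _ ψ => ψ.preds

def imp (ψ χ : Fml) : Fml := neg (conj ψ (neg χ))
def or (ψ χ : Fml) : Fml := neg (conj (neg ψ) (neg χ))
def iff (ψ χ : Fml) : Fml := conj (ψ.imp χ) (χ.imp ψ)
def box (ψ : Fml) : Fml := neg (dia (neg ψ))
/-- `∃x ψ := ¬∃[≤0]x ψ`. -/
def ex (ψ : Fml) : Fml := neg (countLe 0 ψ)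
/-- `∀x ψ := ∃[≤0]x ¬ψ`. -/
def fal (ψ : Fml) : Fml := countLe 0 (neg ψ)
/-- A tautology. -/
def top : Fml := neg (conj (atom 0) (neg (atom 0)))

/-- `boxIter n ψ` is `□^n ψ`. -/
def boxIter : ℕ → Fml → Fml
  | 0, ψ => ψ
  | n+1, ψ => (boxIter n ψ).box

/-- `boxLe m ψ` is `⋀_{k=0}^{m} □^k ψ`. -/
def boxLe : ℕ → Fml → Fml
  | 0, ψ => ψ
  | n+1, ψ => conj (boxLe n ψ) (boxIter (n+1) ψ)

end Fml

/-- A first-order Kripke model `M = (W,R,D,d,I)` (unary predicates suffice for the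
one-variable fragment). -/
structure KModel where
  W : Type
  R : W → W → Prop
  D : Type
  Dne : Nonempty D
  dom : W → Set D
  domNe : ∀ w, (dom w).Nonempty
  I : W → ℕ → Set D
  Isub : ∀ w p, I w p ⊆ dom w

/-- Satisfaction `M,w ⊨^a φ`. -/
def KModel.sat (M : KModel) : Fml → M.W → M.D → Prop
  | .atom p, w, a => a ∈ M.I w p
  | .neg ψ, w, a => ¬ M.sat ψ w a
  | .conj ψ χ, w, a => M.sat ψ w a ∧ M.sat χ w a
  | .dia ψ, w, a => ∃ v, M.R w v ∧ M.sat ψ v a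
  | .countLe c ψ, w, _ => {b | b ∈ M.dom w ∧ M.sat ψ w b}.encard ≤ (c : ℕ∞)

def KModel.constDom (M : KModel) : Prop := ∀ u v, M.dom u = M.dom v
def KModel.expDom (M : KModel) : Prop := ∀ u v, M.R u v → M.dom u ⊆ M.dom v
def KModel.decDom (M : KModel) : Prop := ∀ u v, M.R u v → M.dom v ⊆ M.dom u

/-- Satisfiability with respect to QK (constant domains). -/
def satQK (φ : Fml) : Prop :=
  ∃ M : KModel, M.constDom ∧ ∃ w a, a ∈ M.dom w ∧ M.sat φ w a

/-- Satisfiability with respect to QK^exp (expanding domains). -/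
def satQKexp (φ : Fml) : Prop :=
  ∃ M : KModel, M.expDom ∧ ∃ w a, a ∈ M.dom w ∧ M.sat φ w a

/-- Satisfiability with respect to QK^dec (decreasing domains). -/
def satQKdec (φ : Fml) : Prop :=
  ∃ M : KModel, M.decDom ∧ ∃ w a, a ∈ M.dom w ∧ M.sat φ w a

/-- `R` is the immediate-successor (parent–child) relation of a rooted irreflexive
intransitive tree of depth ≤ m with root `r`. -/
def IsTreeOfDepth {W : Type} (R : W → W → Prop) (r : W) (m : ℕ) : Prop :=
  ∃ depth : W → ℕ,
    depth r = 0 ∧ (∀ w, depth w ≤ m) ∧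
    (∀ u v, R u v → depth v = depth u + 1) ∧
    (∀ v, v ≠ r → ∃! u, R u v) ∧
    (∀ v, Relation.ReflTransGen R r v)

/-- A type for φ: a Boolean-saturated subset of sub(φ). -/
def IsType (φ : Fml) (t : Finset Fml) : Prop :=
  t ⊆ φ.sub ∧
  (∀ ψ, Fml.neg ψ ∈ φ.sub → (Fml.neg ψ ∈ t ↔ ψ ∉ t)) ∧
  (∀ ψ χ, Fml.conj ψ χ ∈ φ.sub → (Fml.conj ψ χ ∈ t ↔ ψ ∈ t ∧ χ ∈ t))

/-- A quasistate for φ: a nonempty set of types with a multiplicity function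
`μ : T → {1,…,cpt(φ)+1}` satisfying ∃[≤c]-saturation. -/
structure IsQuasistate (φ : Fml) (T : Finset (Finset Fml)) (μ : Finset Fml → ℕ) : Prop where
  nonempty : T.Nonempty
  types : ∀ t ∈ T, IsType φ t
  mu_pos : ∀ t ∈ T, 1 ≤ μ t
  mu_le : ∀ t ∈ T, μ t ≤ φ.cpt + 1
  count : ∀ t ∈ T, ∀ c ξ, Fml.countLe c ξ ∈ φ.sub →
    (Fml.countLe c ξ ∈ t ↔ (T.filter (fun t' => ξ ∈ t')).sum μ ≤ c)

/-- `(W,≺,q,I,{r_i})` is a quasimodel for φ. -/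
structure IsQuasimodel (φ : Fml) {W I : Type} (prec : W → W → Prop) (root : W)
    (T : W → Finset (Finset Fml)) (μ : W → Finset Fml → ℕ)
    (r : I → W → Finset Fml) : Prop where
  tree : IsTreeOfDepth prec root φ.md
  qs : ∀ w, IsQuasistate φ (T w) (μ w)
  ine : Nonempty I
  run : ∀ i w, r i w ∈ T w
  witness : ∃ w t, t ∈ T w ∧ φ ∈ t
  coherence : ∀ i w v ξ, Fml.dia ξ ∈ φ.sub → prec w v → ξ ∈ r i v → Fml.dia ξ ∈ r i w
  saturation : ∀ i w ξ, Fml.dia ξ ∈ φ.sub → Fml.dia ξ ∈ r i w → ∃ v, prec w v ∧ ξ ∈ r i v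
  mult : ∀ w t, t ∈ T w → (μ w t : ℕ∞) = min {i : I | r i w = t}.encard ((φ.cpt : ℕ∞) + 1)

/-- Bundled quasimodels for φ. -/
structure Quasimodel (φ : Fml) where
  W : Type
  I : Type
  prec : W → W → Prop
  root : W
  T : W → Finset (Finset Fml)
  μ : W → Finset Fml → ℕ
  r : I → W → Finset Fml
  isQM : IsQuasimodel φ prec root T μ r

/-! Unravel the given quasimodel from a world realising `φ`, keeping only boundedly many runs.
At a world of remaining height `h` every type keeps `quota φ h` of its runs (all of them if it
has fewer). Passing to a successor, the kept runs are exchanged for other runs of the same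
types so that the runs the successor must keep, and the run whose `◇`-formula is being
witnessed, are among them; as there are at most `2 ^ |sub φ|` types, this fits because
`2 ^ |sub φ| * quota φ h < quota φ (h + 1)`. Since `quota φ h > cpt φ`, the multiplicities are
unchanged. The new tree branches over pairs (run, `◇`-formula) and has depth at most `md φ`. -/

open Set Function

namespace Fml

lemma card_sub_le_len (φ : Fml) : φ.sub.card ≤ φ.len := by
  induction φ with
  | atom => simp [sub, len]
  | neg ψ ih | dia ψ ih | countLe c ψ ih =>
    simp only [sub, len]; grind [Finset.card_insert_le]
  | conj ψ χ ih₁ ih₂ =>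
    simp only [sub, len]; grind [Finset.card_insert_le, Finset.card_union_le]

lemma md_le_len (φ : Fml) : φ.md ≤ φ.len := by
  induction φ <;> simp only [md, len] <;> omega

lemma cpt_lt_two_pow_len (φ : Fml) : φ.cpt < 2 ^ φ.len := by
  have mono : ∀ {a b : ℕ}, a ≤ b → 2 ^ a ≤ 2 ^ b := Nat.pow_le_pow_right two_pos
  induction φ with
  | atom => simp [cpt, len]
  | neg ψ ih | dia ψ ih => exact ih.trans_le (mono (by simp only [len]; omega))
  | conj ψ χ ih₁ ih₂ =>
    exact max_lt (ih₁.trans_le (mono (by simp only [len]; omega)))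
      (ih₂.trans_le (mono (by simp only [len]; omega)))
  | countLe c ψ ih =>
    exact max_lt ((Nat.lt_size_self c).trans_le (mono (by simp only [len]; omega)))
      (ih.trans_le (mono (by simp only [len]; omega)))

lemma injective_dia_subtype (φ : Fml) :
    Injective fun ξ : {ξ // dia ξ ∈ φ.sub} => (⟨dia ξ, ξ.2⟩ : φ.sub) :=
  fun _ _ h => Subtype.ext (dia.inj (congrArg Subtype.val h))

instance (φ : Fml) : Finite {ξ // dia ξ ∈ φ.sub} :=
  Finite.of_injective _ φ.injective_dia_subtype

lemma card_dia_subtype_le_len (φ : Fml) : Nat.card {ξ // dia ξ ∈ φ.sub} ≤ φ.len :=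
  (Nat.card_le_card_of_injective _ φ.injective_dia_subtype).trans
    ((Nat.card_eq_finsetCard _).trans_le φ.card_sub_le_len)

end Fml

lemma exists_injective_cover_fixing {α X : Type*} [Finite α] {g : α → X} (hg : Injective g)
    {D : Set X} (hD : D.encard ≤ ENat.card α) :
    ∃ g' : α → X, Injective g' ∧ D ⊆ range g' ∧ range g' ⊆ D ∪ range g ∧
      ∀ a, g a ∈ D → g' a = g a := by
  have := Fintype.ofFinite α
  obtain ⟨S, hDS, hS, hScard⟩ := exists_superset_subset_encard_eq subset_union_left hD
    (hg.encard_range.trans (encard_le_encard subset_union_right))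
  obtain ⟨S, rfl⟩ :=
    (finite_of_encard_eq_coe (hScard.trans ENat.card_eq_coe_fintype_card)).exists_finset_coe
  have hcard : Fintype.card α = S.card := by
    rw [encard_coe_eq_coe_finsetCard, ENat.card_eq_coe_fintype_card] at hScard
    exact_mod_cast hScard.symm
  obtain ⟨e, he⟩ := MapsTo.exists_equiv_extend_of_card_eq hcard (s := {a | g a ∈ D})
    (fun a ha => hDS ha) hg.injOn
  refine ⟨fun a => e a, Subtype.val_injective.comp e.injective, fun x hx => ?_,
    range_subset_iff.2 fun a => hS (e a).2, he⟩
  exact ⟨e.symm ⟨x, hDS hx⟩, by simp⟩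

lemma exists_injective_fiberwise_cover {α X β : Type*} [Finite α] (f : X → β) {g : α → X}
    (hg : Injective g) {D : Set X}
    (hD : ∀ b, (D ∩ f ⁻¹' {b}).encard ≤ {a | f (g a) = b}.encard) :
    ∃ g' : α → X, Injective g' ∧ (∀ a, f (g' a) = f (g a)) ∧ D ⊆ range g' ∧
      ∀ a, g a ∈ D → g' a = g a := by
  choose G hGinj hGcov hGrange hGfix using fun b =>
    exists_injective_cover_fixing (g := fun a : {a | f (g a) = b} => g a)
      (hg.comp Subtype.val_injective) (hD b)
  have hfG : ∀ b a, f (G b a) = b := fun b a => by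
    rcases hGrange b ⟨a, rfl⟩ with ⟨-, h⟩ | ⟨a', h⟩
    · exact h
    · rw [← h]; exact a'.2
  let g' a := G (f (g a)) ⟨a, rfl⟩
  have hg' : ∀ b a (h : f (g a) = b), g' a = G b ⟨a, h⟩ := by rintro _ a rfl; rfl
  refine ⟨g', fun a a' h => ?_, fun a => hfG _ _, fun x hx => ?_,
    fun a ha => hGfix _ ⟨a, rfl⟩ ⟨ha, rfl⟩⟩
  · have hb : f (g a') = f (g a) := by
      rw [← hfG _ ⟨a, rfl⟩, ← hfG _ ⟨a', rfl⟩]; exact congrArg f h.symm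
    rw [hg' _ a' hb] at h
    exact congrArg Subtype.val (hGinj _ h)
  · obtain ⟨⟨a, ha⟩, hax⟩ := hGcov (f x) ⟨hx, rfl⟩
    exact ⟨a, (hg' _ a ha).trans hax⟩

section Unravelling

variable {N S : Type} (next : N → S → Option N) (n₀ : N)

/-- The node reached from `n₀` by following the labels of `l` from its last entry to its head. -/
def pathEnd : List S → Option N
  | [] => some n₀
  | c :: l => (pathEnd l).bind (next · c)

def Unravel : Type := {l : List S // (pathEnd next n₀ l).isSome}

namespace Unravel

variable {next n₀}

def root : Unravel next n₀ := ⟨[], rfl⟩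

def node (p : Unravel next n₀) : N := (pathEnd next n₀ p.1).get p.2

def Child (p q : Unravel next n₀) : Prop := ∃ c, q.1 = c :: p.1

lemma pathEnd_eq_node (p : Unravel next n₀) : pathEnd next n₀ p.1 = some p.node := by
  simp [node]

lemma next_node_of_child {p q : Unravel next n₀} (h : Child p q) :
    ∃ c, next p.node c = some q.node := by
  obtain ⟨c, hc⟩ := h
  have hq := q.pathEnd_eq_node
  rw [hc, pathEnd, p.pathEnd_eq_node] at hq
  exact ⟨c, hq⟩

lemma exists_child_of_next {p : Unravel next n₀} {c : S} {n : N} (h : next p.node c = some n) :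
    ∃ q : Unravel next n₀, Child p q ∧ q.node = n := by
  have hq : pathEnd next n₀ (c :: p.1) = some n := by rw [pathEnd, p.pathEnd_eq_node]; exact h
  let q : Unravel next n₀ := ⟨c :: p.1, by rw [hq]; rfl⟩
  exact ⟨q, ⟨c, rfl⟩, Option.some.inj (q.pathEnd_eq_node.symm.trans hq)⟩

lemma length_le_of_rank (ρ : N → ℕ) (hρ : ∀ n c n', next n c = some n' → ρ n' = ρ n + 1)
    {m : ℕ} (hm : ∀ n, ρ n ≤ m) (p : Unravel next n₀) : p.1.length ≤ m := by
  suffices ∀ l n, pathEnd next n₀ l = some n → ρ n = ρ n₀ + l.length by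
    have := this _ _ p.pathEnd_eq_node
    have := hm p.node
    omega
  intro l
  induction l with
  | nil => rintro n ⟨⟩; rfl
  | cons c l ih =>
    intro n h
    obtain ⟨n', hn', hc⟩ := Option.bind_eq_some_iff.1 h
    rw [hρ _ _ _ hc, ih _ hn', List.length_cons, add_assoc]

lemma isTreeOfDepth {m : ℕ} (hlen : ∀ p : Unravel next n₀, p.1.length ≤ m) :
    IsTreeOfDepth (Child : Unravel next n₀ → _ → Prop) root m := by
  refine ⟨fun p => p.1.length, rfl, hlen, ?_, ?_, ?_⟩
  · rintro p q ⟨c, hc⟩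
    simp [hc]
  · rintro ⟨_ | ⟨c, l⟩, hl⟩ hne
    · exact absurd rfl hne
    · have hl' : (pathEnd next n₀ l).isSome := Option.isSome_of_isSome_bind hl
      refine ⟨⟨l, hl'⟩, ⟨c, rfl⟩, ?_⟩
      rintro p ⟨c', hc'⟩
      exact Subtype.ext (List.cons.inj hc').2.symm
  · rintro ⟨l, hl⟩
    induction l with
    | nil => exact .refl
    | cons c l ih => exact .tail (ih (Option.isSome_of_isSome_bind hl)) ⟨c, rfl⟩

lemma finite_and_card_le [Finite S] {m : ℕ} (hlen : ∀ p : Unravel next n₀, p.1.length ≤ m) :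
    Finite (Unravel next n₀) ∧ Nat.card (Unravel next n₀) ≤ (Nat.card S + 1) ^ (m + 1) := by
  let enc (p : Unravel next n₀) (i : Fin (m + 1)) : Option S := p.1[(i : ℕ)]?
  have henc : Injective enc := fun p q h => Subtype.ext <| List.ext_getElem? fun i => by
    by_cases hi : i < m + 1
    · exact congrFun h ⟨i, hi⟩
    · rw [List.getElem?_eq_none (by have := hlen p; omega),
        List.getElem?_eq_none (by have := hlen q; omega)]
  refine ⟨Finite.of_injective enc henc, (Nat.card_le_card_of_injective enc henc).trans_eq ?_⟩
  rw [Nat.card_fun, Finite.card_option, Nat.card_fin]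

end Unravel

end Unravelling

def quota (φ : Fml) (h : ℕ) : ℕ := 2 ^ ((φ.len + 1) * (h + 1))

lemma cpt_lt_quota (φ : Fml) (h : ℕ) : φ.cpt < quota φ h :=
  φ.cpt_lt_two_pow_len.trans_le (Nat.pow_le_pow_right two_pos (by nlinarith))

lemma two_pow_card_sub_mul_quota_lt (φ : Fml) (h : ℕ) :
    2 ^ φ.sub.card * quota φ h < quota φ (h + 1) := by
  have hJ : 2 ^ φ.sub.card < 2 ^ (φ.len + 1) :=
    Nat.pow_lt_pow_right one_lt_two (by have := φ.card_sub_le_len; omega)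
  calc 2 ^ φ.sub.card * quota φ h < 2 ^ (φ.len + 1) * quota φ h :=
        Nat.mul_lt_mul_of_pos_right hJ (Nat.two_pow_pos _)
    _ = quota φ (h + 1) := by rw [quota, quota, ← pow_add]; ring_nf

lemma mul_add_one_pow_le_two_pow {L N m : ℕ} (hN : N ≤ 2 ^ ((L + 2) ^ 2)) (hm : m ≤ L) :
    (N * L + 1) ^ (m + 1) ≤ 2 ^ ((L + 2) ^ 3) := by
  set A := (L + 2) ^ 2
  have hbase : N * L + 1 ≤ 2 ^ (A + L) := calc
    N * L + 1 ≤ 2 ^ A * (L + 1) := by nlinarith [Nat.one_le_two_pow (n := A)]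
    _ ≤ 2 ^ A * 2 ^ L := Nat.mul_le_mul_left _ Nat.lt_two_pow_self
    _ = 2 ^ (A + L) := (pow_add _ _ _).symm
  calc (N * L + 1) ^ (m + 1) ≤ (2 ^ (A + L)) ^ (L + 1) :=
        (Nat.pow_le_pow_left hbase _).trans (Nat.pow_le_pow_right (Nat.two_pow_pos _) (by omega))
    _ = 2 ^ ((A + L) * (L + 1)) := (pow_mul _ _ _).symm
    _ ≤ 2 ^ ((L + 2) ^ 3) := Nat.pow_le_pow_right two_pos (by simp only [A]; nlinarith)

namespace Quasimodel

noncomputable section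

variable {φ : Fml} (Q : Quasimodel φ)

def depth : Q.W → ℕ := Q.isQM.tree.choose

lemma depth_le (w : Q.W) : Q.depth w ≤ φ.md := Q.isQM.tree.choose_spec.2.1 w

lemma depth_succ {w v : Q.W} (h : Q.prec w v) : Q.depth v = Q.depth w + 1 :=
  Q.isQM.tree.choose_spec.2.2.1 w v h

def runsOfType (w : Q.W) (t : Finset Fml) : Set Q.I := {i | Q.r i w = t}

lemma runsOfType_eq_empty {w : Q.W} {t : Finset Fml} (ht : t ∉ Q.T w) : Q.runsOfType w t = ∅ :=
  eq_empty_of_forall_notMem fun i hi => ht (hi ▸ Q.isQM.run i w)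

lemma card_T_le (w : Q.W) : (Q.T w).card ≤ 2 ^ φ.sub.card := by
  rw [← Finset.card_powerset]
  exact Finset.card_le_card fun t ht => Finset.mem_powerset.2 ((Q.isQM.qs w).types t ht).1

def sample (w : Q.W) (k : ℕ) (t : Finset Fml) : Set Q.I :=
  (exists_subset_encard_eq (min_le_left (Q.runsOfType w t).encard k)).choose

lemma sample_subset (w : Q.W) (k : ℕ) (t : Finset Fml) : Q.sample w k t ⊆ Q.runsOfType w t :=
  (exists_subset_encard_eq (min_le_left (Q.runsOfType w t).encard k)).choose_spec.1

lemma encard_sample (w : Q.W) (k : ℕ) (t : Finset Fml) :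
    (Q.sample w k t).encard = min (Q.runsOfType w t).encard k :=
  (exists_subset_encard_eq (min_le_left (Q.runsOfType w t).encard k)).choose_spec.2

def samples (w : Q.W) (k : ℕ) : Set Q.I := ⋃ t ∈ Q.T w, Q.sample w k t

lemma sample_subset_samples (w : Q.W) (k : ℕ) (t : Finset Fml) :
    Q.sample w k t ⊆ Q.samples w k := by
  by_cases ht : t ∈ Q.T w
  · exact subset_biUnion_of_mem (u := fun t => Q.sample w k t) ht
  · exact (Q.sample_subset w k t).trans (Q.runsOfType_eq_empty ht ▸ empty_subset _)

lemma encard_samples_le (w : Q.W) (k : ℕ) : (Q.samples w k).encard ≤ 2 ^ φ.sub.card * k :=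
  calc (Q.samples w k).encard ≤ ∑ t ∈ Q.T w, (Q.sample w k t).encard :=
        Finset.set_encard_biUnion_le _ _
    _ ≤ (Q.T w).card • (k : ℕ∞) :=
        Finset.sum_le_card_nsmul _ _ _ fun t _ =>
          (Q.encard_sample w k t).trans_le (min_le_right _ _)
    _ ≤ 2 ^ φ.sub.card * k := by
        rw [nsmul_eq_mul]; exact mul_le_mul_left (by exact_mod_cast Q.card_T_le w) _

def Covers {α : Type} (w : Q.W) (sel : α → Q.I) (k : ℕ) : Prop :=
  Injective sel ∧ ∀ t, min (Q.runsOfType w t).encard k ≤ (sel ⁻¹' Q.runsOfType w t).encard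

variable {Q}

lemma covers_of_sample_subset_range {α : Type} {w : Q.W} {sel : α → Q.I} {k : ℕ}
    (hsel : Injective sel) (h : ∀ t, Q.sample w k t ⊆ range sel) : Q.Covers w sel k :=
  ⟨hsel, fun t => calc
    min (Q.runsOfType w t).encard k = (sel ⁻¹' Q.sample w k t).encard := by
      rw [encard_preimage_of_injective_subset_range hsel (h t), encard_sample]
    _ ≤ (sel ⁻¹' Q.runsOfType w t).encard :=
      encard_le_encard (preimage_mono (Q.sample_subset w k t))⟩

lemma Covers.exists_extend {α : Type} [Finite α] {w : Q.W} {sel : α → Q.I} {h : ℕ}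
    (hc : Q.Covers w sel (quota φ (h + 1))) (a : α) (v : Q.W) :
    ∃ sel' : α → Q.I, Q.Covers v sel' (quota φ h) ∧
      (∀ b, Q.r (sel' b) w = Q.r (sel b) w) ∧ sel' a = sel a := by
  set D := Q.samples v (quota φ h) ∪ {sel a}
  have hD : D.encard ≤ quota φ (h + 1) := calc
    D.encard ≤ 2 ^ φ.sub.card * quota φ h + 1 :=
      (encard_union_le _ _).trans (add_le_add (Q.encard_samples_le v _) (encard_singleton _).le)
    _ ≤ quota φ (h + 1) := by exact_mod_cast two_pow_card_sub_mul_quota_lt φ h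
  obtain ⟨sel', hinj, htype, hcov, hfix⟩ := exists_injective_fiberwise_cover (fun i => Q.r i w)
    hc.1 (D := D) fun t =>
      (le_min (encard_le_encard inter_subset_right)
        ((encard_le_encard inter_subset_left).trans hD)).trans (hc.2 t)
  exact ⟨sel', covers_of_sample_subset_range hinj fun t =>
    (Q.sample_subset_samples v _ t).trans (subset_union_left.trans hcov), htype,
    hfix a (mem_union_right _ rfl)⟩

lemma Covers.min_encard_eq {α : Type} {w : Q.W} {sel : α → Q.I} {k : ℕ}
    (hc : Q.Covers w sel k) (hk : φ.cpt + 1 ≤ k) (t : Finset Fml) :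
    min (sel ⁻¹' Q.runsOfType w t).encard (φ.cpt + 1) =
      min (Q.runsOfType w t).encard (φ.cpt + 1) := by
  have hk : ((φ.cpt : ℕ∞) + 1) ≤ k := by exact_mod_cast hk
  refine le_antisymm (min_le_min_right _ ?_) (le_min ?_ (min_le_right _ _))
  · rw [← hc.1.encard_image]; exact encard_le_encard (image_preimage_subset _ _)
  · exact (min_le_min_left _ hk).trans (hc.2 t)

variable (Q)

def witnessWorld : Q.W := Q.isQM.witness.choose

def budget (w : Q.W) : ℕ := quota φ (φ.md - Q.depth w)

def indexSet : Set Q.I := Q.samples Q.witnessWorld (Q.budget Q.witnessWorld)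

lemma encard_indexSet_le : Q.indexSet.encard ≤ (2 ^ ((φ.len + 2) ^ 2) : ℕ) := by
  refine (Q.encard_samples_le _ _).trans ?_
  have hJ : 2 ^ φ.sub.card ≤ 2 ^ φ.len := Nat.pow_le_pow_right two_pos φ.card_sub_le_len
  have hquota : Q.budget Q.witnessWorld ≤ 2 ^ ((φ.len + 1) * (φ.len + 1)) :=
    Nat.pow_le_pow_right two_pos (Nat.mul_le_mul_left _ (by have := φ.md_le_len; omega))
  have : 2 ^ φ.sub.card * Q.budget Q.witnessWorld ≤ 2 ^ ((φ.len + 2) ^ 2) := calc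
    _ ≤ 2 ^ φ.len * 2 ^ ((φ.len + 1) * (φ.len + 1)) := Nat.mul_le_mul hJ hquota
    _ = 2 ^ (φ.len + (φ.len + 1) * (φ.len + 1)) := (pow_add _ _ _).symm
    _ ≤ 2 ^ ((φ.len + 2) ^ 2) := Nat.pow_le_pow_right two_pos (by nlinarith)
  exact_mod_cast this

instance : Finite Q.indexSet := (finite_of_encard_le_coe Q.encard_indexSet_le).to_subtype

instance : Nonempty Q.indexSet := by
  obtain ⟨i⟩ := Q.isQM.ine
  set t := Q.r i Q.witnessWorld
  have hi : 1 ≤ (Q.runsOfType Q.witnessWorld t).encard :=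
    one_le_encard_iff_nonempty.2 ⟨i, rfl⟩
  have hbudget : (1 : ℕ∞) ≤ Q.budget Q.witnessWorld := by
    exact_mod_cast Nat.one_le_two_pow
  obtain ⟨j, hj⟩ := one_le_encard_iff_nonempty.1
    ((le_min hi hbudget).trans_eq (Q.encard_sample _ _ t).symm)
  exact ⟨⟨j, Q.sample_subset_samples _ _ t hj⟩⟩

/-- At this node, run `a` of the small quasimodel follows run `sel a` of `Q`. -/
structure Node where
  world : Q.W
  sel : Q.indexSet → Q.I
  covers : Q.Covers world sel (Q.budget world)

def rootNode : Q.Node where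
  world := Q.witnessWorld
  sel := Subtype.val
  covers := covers_of_sample_subset_range Subtype.val_injective fun t =>
    (Q.sample_subset_samples _ _ t).trans Subtype.range_coe.symm.subset

abbrev Label : Type := Q.indexSet × {ξ : Fml // Fml.dia ξ ∈ φ.sub}

def IsChild (n : Q.Node) (c : Q.Label) (n' : Q.Node) : Prop :=
  Q.prec n.world n'.world ∧ (∀ b, Q.r (n'.sel b) n.world = Q.r (n.sel b) n.world) ∧
    c.2.1 ∈ Q.r (n'.sel c.1) n'.world

open Classical in
def child (n : Q.Node) (c : Q.Label) : Option Q.Node :=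
  if h : ∃ n', Q.IsChild n c n' then some h.choose else none

variable {Q}

lemma isChild_of_child_eq_some {n n' : Q.Node} {c : Q.Label} (h : Q.child n c = some n') :
    Q.IsChild n c n' := by
  unfold child at h
  split_ifs at h with hex
  exact Option.some.inj h ▸ hex.choose_spec

lemma exists_child_eq_some (n : Q.Node) (a : Q.indexSet) {ξ : Fml} (hξ : Fml.dia ξ ∈ φ.sub)
    (h : Fml.dia ξ ∈ Q.r (n.sel a) n.world) :
    ∃ n', Q.child n (a, ⟨ξ, hξ⟩) = some n' := by
  obtain ⟨v, hwv, hv⟩ := Q.isQM.saturation _ _ _ hξ h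
  have hbudget : Q.budget n.world = quota φ (φ.md - Q.depth v + 1) := by
    have := Q.depth_succ hwv
    have := Q.depth_le v
    unfold budget; congr 1; omega
  obtain ⟨sel', hc, htype, hfix⟩ := (hbudget ▸ n.covers).exists_extend a v
  have hex : ∃ n', Q.IsChild n (a, ⟨ξ, hξ⟩) n' :=
    ⟨⟨v, sel', hc⟩, hwv, htype, show ξ ∈ Q.r (sel' a) v from hfix ▸ hv⟩
  exact ⟨_, dif_pos hex⟩

lemma length_le_md (p : Unravel Q.child Q.rootNode) : p.1.length ≤ φ.md :=
  Unravel.length_le_of_rank (fun n => Q.depth n.world)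
    (fun _ _ _ h => Q.depth_succ (isChild_of_child_eq_some h).1) (fun n => Q.depth_le n.world) p

variable (Q)

def small : Quasimodel φ where
  W := Unravel Q.child Q.rootNode
  I := Q.indexSet
  prec := Unravel.Child
  root := Unravel.root
  T p := Q.T p.node.world
  μ p := Q.μ p.node.world
  r a p := Q.r (p.node.sel a) p.node.world
  isQM :=
  { tree := Unravel.isTreeOfDepth length_le_md
    qs := fun _ => Q.isQM.qs _
    ine := inferInstance
    run := fun _ _ => Q.isQM.run _ _
    witness := ⟨Unravel.root, Q.isQM.witness.choose_spec⟩
    coherence := fun a p q ξ hξ hpq h => by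
      obtain ⟨c, hc⟩ := Unravel.next_node_of_child hpq
      obtain ⟨hprec, htype, -⟩ := isChild_of_child_eq_some hc
      exact htype a ▸ Q.isQM.coherence _ _ _ _ hξ hprec h
    saturation := fun a p ξ hξ h => by
      obtain ⟨n, hn⟩ := exists_child_eq_some p.node a hξ h
      obtain ⟨q, hpq, rfl⟩ := Unravel.exists_child_of_next hn
      exact ⟨q, hpq, (isChild_of_child_eq_some hn).2.2⟩
    mult := fun p t ht => (Q.isQM.mult _ t ht).trans
      (p.node.covers.min_encard_eq (cpt_lt_quota φ _) t).symm }

lemma card_indexSet_le : Nat.card Q.indexSet ≤ 2 ^ ((φ.len + 2) ^ 2) := by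
  rw [Nat.card_coe_set_eq]
  exact (encard_le_coe_iff_finite_ncard_le.1 Q.encard_indexSet_le).2

lemma card_label_le : Nat.card Q.Label ≤ Nat.card Q.indexSet * φ.len := by
  rw [Nat.card_prod]
  exact Nat.mul_le_mul_left _ φ.card_dia_subtype_le_len

lemma finite_small_W_and_card_le :
    Finite Q.small.W ∧ Nat.card Q.small.W ≤ 2 ^ ((φ.len + 2) ^ 3) := by
  obtain ⟨hfin, hcard⟩ := Unravel.finite_and_card_le (S := Q.Label) length_le_md
  refine ⟨hfin, hcard.trans ((Nat.pow_le_pow_left ?_ _).trans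
    (mul_add_one_pow_le_two_pow Q.card_indexSet_le φ.md_le_len))⟩
  exact Nat.add_le_add_right Q.card_label_le 1

lemma card_small_I_le : Nat.card Q.small.I ≤ 2 ^ ((φ.len + 2) ^ 3) :=
  Q.card_indexSet_le.trans
    (Nat.pow_le_pow_right two_pos (Nat.pow_le_pow_right (by omega) (by omega)))

end

end Quasimodel

/-- if φ has a quasimodel, it has a quasimodel whose set of worlds and index
set are both finite of size at most exponential in a fixed polynomial of |φ|. -/
theorem stmt_3 : ∃ k : ℕ, ∀ φ : Fml, Nonempty (Quasimodel φ) →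
    ∃ Q : Quasimodel φ, Finite Q.W ∧ Finite Q.I ∧
      Nat.card Q.W ≤ 2 ^ ((φ.len + 2) ^ k) ∧ Nat.card Q.I ≤ 2 ^ ((φ.len + 2) ^ k) := by
  refine ⟨3, fun φ ⟨Q⟩ => ?_⟩
  obtain ⟨hfin, hcard⟩ := Q.finite_small_W_and_card_le
  exact ⟨Q.small, hfin, inferInstanceAs (Finite Q.indexSet), hcard, Q.card_small_I_le⟩
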